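/- Let M be a squarefree P-module of dimension d with the ℕ^d-grading induced by deg x_σ = e_{rank σ}. Then the ℕ^d-graded Hilbert series of M equals (Σ_{S⊆[d]} h_S(M) t^S) / ∏_{i=1}^d (1−t_i), where h_S(M) = Σ_{T⊆S} (−1)^{|S|−|T|} dim_K M_{e_T}. -/

import Mathlib

open Classical DirectSum

/-- `P̂ = P \ {⊥}`. -/
abbrev Phat (P : Type) [PartialOrder P] [OrderBot P] := {σ : P // σ ≠ ⊥}

variable {K : Type} [Field K] {P : Type} [Fintype P] [PartialOrder P] [OrderBot P]
  [DecidableEq P]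

/-- `supp u` is a face of the order complex `Δ_P`, i.e. a chain of `P̂`. -/
def ChainSupp (u : Phat P →₀ ℕ) : Prop :=
  ∀ σ ∈ u.support, ∀ τ ∈ u.support, (σ : P) ≤ (τ : P) ∨ (τ : P) ≤ (σ : P)

/-- `τ ≤ max (supp u)` (in particular `supp u` has a maximum). -/
def LeMaxSupp (u : Phat P →₀ ℕ) (τ : Phat P) : Prop :=
  ∃ ρ ∈ u.support, (τ : P) ≤ (ρ : P) ∧ ∀ σ ∈ u.support, (σ : P) ≤ (ρ : P)

/-- A squarefree `P`-module: a finitely generated `ℕ^{|P̂|}`-graded module `M` over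
`R = K[x_σ : σ ∈ P̂]` (the grading `π` being given by `K`-subspaces with
`x_τ · M_u ⊆ M_{u + e_τ}`) such that
(a) `M_u = 0` whenever `supp u ∉ Δ_P`, and
(b) `×x_τ : M_u → M_{u+e_τ}` is bijective whenever `supp (u + e_τ) ∈ Δ_P` and
`τ ≤ max (supp u)`. -/
def IsSquarefreePMod (M : Type) [AddCommGroup M]
    [Module (MvPolynomial (Phat P) K) M] [Module K M]
    [IsScalarTower K (MvPolynomial (Phat P) K) M]
    (π : (Phat P →₀ ℕ) → Submodule K M) : Prop :=
  DirectSum.IsInternal π ∧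
  Module.Finite (MvPolynomial (Phat P) K) M ∧
  (∀ u, FiniteDimensional K (π u)) ∧
  (∀ (u) (τ : Phat P), ∀ x ∈ π u,
    (MvPolynomial.X τ : MvPolynomial (Phat P) K) • x ∈ π (u + Finsupp.single τ 1)) ∧
  (∀ u, ¬ ChainSupp u → π u = ⊥) ∧
  (∀ (u) (τ : Phat P), ChainSupp (u + Finsupp.single τ 1) → LeMaxSupp u τ →
    Set.BijOn (fun x => (MvPolynomial.X τ : MvPolynomial (Phat P) K) • x)
      (↑(π u) : Set M) (↑(π (u + Finsupp.single τ 1)) : Set M))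

/-- The exponent vector `e_σ` (with `e_⊥ = 0`). -/
noncomputable def eVec (σ : P) : Phat P →₀ ℕ :=
  if h : σ = ⊥ then 0 else Finsupp.single ⟨σ, h⟩ 1

/-- The `ℕ^d`-degree (indexed here by ranks `1, …, d` inside `ℕ`) induced by
`deg x_σ = e_{rk σ}`. -/
noncomputable def rkDeg (rk : P → ℕ) (u : Phat P →₀ ℕ) : ℕ →₀ ℕ :=
  u.sum (fun σ m => Finsupp.single (rk σ.1) m)

/-!
Multiplication by `x_τ` is an isomorphism `M_u ≅ M_{u + e_τ}` whenever `τ` lies below the maximum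
of the chain `supp u`. Hence for chain-supported `u` the dimension of `M_u` is that of
`M_{e_{supp u}}`, and it vanishes as soon as the chain reaches rank `> d`. A chain-supported
multidegree is determined by its support and its rank degree, so
`dim_K M_v = ∑_C dim_K M_{e_C}` over the chains `C` with rank set `supp v`: the Hilbert function
depends only on `supp v` and vanishes unless `supp v ⊆ [d]`. For such a function `F`, the
coefficient of `t^v` in `∏ (1 - t_i) · H` is `∑_{S ⊆ supp v} (-1)^|S| F(supp (v - e_S))`; it
cancels in pairs unless `v` is squarefree, and then it is the inclusion–exclusion sum `h_{supp v}`.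
-/

section eSet

variable {α : Type*}

noncomputable def eSet (S : Finset α) : α →₀ ℕ := ∑ i ∈ S, Finsupp.single i 1

theorem eSet_apply (S : Finset α) (i : α) : eSet S i = if i ∈ S then 1 else 0 := by
  simp [eSet, Finsupp.finsetSum_apply, Finsupp.single_apply]

@[simp]
theorem eSet_empty : eSet (∅ : Finset α) = 0 := Finset.sum_empty

theorem eSet_insert {a : α} {S : Finset α} (ha : a ∉ S) :
    eSet (insert a S) = Finsupp.single a 1 + eSet S :=
  Finset.sum_insert ha

@[simp]
theorem support_eSet (S : Finset α) : (eSet S).support = S := by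
  ext i
  simp [eSet_apply]

theorem eSet_le_iff {S : Finset α} {v : α →₀ ℕ} : eSet S ≤ v ↔ S ⊆ v.support := by
  simp only [Finsupp.le_def, eSet_apply, Finset.subset_iff, Finsupp.mem_support_iff]
  refine forall_congr' fun i => ?_
  split_ifs <;> simp [*, Nat.one_le_iff_ne_zero]

theorem eq_eSet_support_iff {v : α →₀ ℕ} : v = eSet v.support ↔ ∀ i, v i ≤ 1 := by
  refine ⟨fun h i => ?_, fun h => Finsupp.ext fun i => ?_⟩
  · rw [h, eSet_apply]
    split_ifs <;> omega
  · have := h i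
    by_cases hi : v i = 0 <;> simp [eSet_apply, hi]; omega

theorem eSet_tsub_eSet {A S : Finset α} (hS : S ⊆ A) : eSet A - eSet S = eSet (A \ S) := by
  ext i
  have := @hS i
  simp only [Finsupp.tsub_apply, eSet_apply, Finset.mem_sdiff]
  split_ifs <;> simp_all

end eSet

section PowerSeries

open MvPowerSeries

variable {σ R : Type*} [CommRing R]

theorem prod_one_sub_X_eq_sum (s : Finset σ) :
    ∏ i ∈ s, (1 - X i : MvPowerSeries σ R) =
      ∑ S ∈ s.powerset, monomial (eSet S) ((-1 : R) ^ S.card) := by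
  induction s using Finset.induction_on with
  | empty => simp
  | insert a s ha ih =>
    rw [Finset.prod_insert ha, ih, Finset.sum_powerset_insert ha, sub_mul, one_mul,
      Finset.mul_sum, sub_eq_add_neg, ← Finset.sum_neg_distrib]
    congr 1
    refine Finset.sum_congr rfl fun S hS => ?_
    have haS : a ∉ S := fun h => ha (Finset.mem_powerset.1 hS h)
    rw [eSet_insert haS, Finset.card_insert_of_notMem haS, X, monomial_mul_monomial, ← map_neg,
      pow_succ, one_mul, mul_neg_one]

theorem coeff_prod_one_sub_X_mul (s : Finset σ) (H : MvPowerSeries σ R) (v : σ →₀ ℕ) :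
    coeff v ((∏ i ∈ s, (1 - X i)) * H) =
      ∑ S ∈ s.powerset with S ⊆ v.support, (-1 : R) ^ S.card * coeff (v - eSet S) H := by
  rw [prod_one_sub_X_eq_sum, Finset.sum_mul, map_sum, Finset.sum_filter]
  refine Finset.sum_congr rfl fun S _ => ?_
  rw [coeff_monomial_mul]
  exact if_congr eSet_le_iff rfl rfl

theorem sum_powerset_neg_one_pow_mul_sdiff (A : Finset σ) (F : Finset σ → R) :
    ∑ S ∈ A.powerset, (-1 : R) ^ S.card * F (A \ S) =
      ∑ T ∈ A.powerset, (-1 : R) ^ (A.card - T.card) * F T := by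
  refine Finset.sum_nbij' (A \ ·) (A \ ·) (by simp) (by simp) ?_ ?_ ?_
  · exact fun S hS => sdiff_sdiff_eq_self (Finset.mem_powerset.1 hS)
  · exact fun T hT => sdiff_sdiff_eq_self (Finset.mem_powerset.1 hT)
  · intro S hS
    have hSA := Finset.mem_powerset.1 hS
    rw [Finset.card_sdiff_of_subset hSA, Nat.sub_sub_self (Finset.card_le_card hSA)]

-- Toggling `i ∈ S` does not change the support of `v - e_S`, since `v i ≥ 2`.
theorem sum_powerset_neg_one_pow_mul_eq_zero {v : σ →₀ ℕ} {i : σ} (hi : 2 ≤ v i)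
    (F : Finset σ → R) :
    ∑ S ∈ v.support.powerset, (-1 : R) ^ S.card * F (v - eSet S).support = 0 := by
  have hiv : i ∈ v.support := Finsupp.mem_support_iff.2 (by omega)
  rw [← Finset.insert_erase hiv, Finset.sum_powerset_insert (Finset.notMem_erase i _),
    ← Finset.sum_add_distrib]
  refine Finset.sum_eq_zero fun S hS => ?_
  have hiS : i ∉ S := fun h => Finset.notMem_erase i _ (Finset.mem_powerset.1 hS h)
  have hsupp : (v - eSet (insert i S)).support = (v - eSet S).support := by
    ext j
    by_cases hj : j = i
    · subst hj
      simp [eSet_apply, hiS]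
      omega
    · simp [eSet_apply, hj]
  rw [hsupp, Finset.card_insert_of_notMem hiS, pow_succ]
  ring

theorem prod_one_sub_X_mul_eq_sum_monomial {s : Finset σ} {H : MvPowerSeries σ R}
    {F h : Finset σ → R} (hH : ∀ v, coeff v H = F v.support) (hF : ∀ S, ¬ S ⊆ s → F S = 0)
    (hh : ∀ S, h S = ∑ T ∈ S.powerset, (-1 : R) ^ (S.card - T.card) * F T) :
    (∏ i ∈ s, (1 - X i)) * H = ∑ S ∈ s.powerset, monomial (eSet S) (h S) := by
  ext v
  simp only [coeff_prod_one_sub_X_mul, hH, map_sum, coeff_monomial]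
  by_cases hvs : v.support ⊆ s
  · have hfilter : {S ∈ s.powerset | S ⊆ v.support} = v.support.powerset := by
      ext S
      simpa using fun hS => hS.trans hvs
    rw [hfilter]
    by_cases hsq : v = eSet v.support
    · rw [Finset.sum_eq_single_of_mem v.support (Finset.mem_powerset.2 hvs), if_pos hsq, hh,
        ← sum_powerset_neg_one_pow_mul_sdiff]
      · refine Finset.sum_congr rfl fun S hS => ?_
        rw [hsq, eSet_tsub_eSet (Finset.mem_powerset.1 hS), support_eSet, support_eSet]
      · intro S _ hS
        exact if_neg fun h => hS (by rw [h, support_eSet])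
    · obtain ⟨i, hi⟩ := not_forall.1 (mt eq_eSet_support_iff.2 hsq)
      rw [sum_powerset_neg_one_pow_mul_eq_zero (i := i) (by omega)]
      refine (Finset.sum_eq_zero fun S _ => if_neg fun h => hsq ?_).symm
      rw [h, support_eSet]
  · obtain ⟨i, hiv, his⟩ := Finset.not_subset.1 hvs
    rw [Finset.sum_eq_zero, Finset.sum_eq_zero]
    · intro S hS
      exact if_neg fun h => hvs (by rw [h, support_eSet]; exact Finset.mem_powerset.1 hS)
    · intro S hS
      have hiS : i ∉ S := fun h => his (Finset.mem_powerset.1 (Finset.mem_filter.1 hS).1 h)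
      rw [hF, mul_zero]
      refine fun hsub => his (hsub ?_)
      simpa [eSet_apply, hiS] using hiv

end PowerSeries

theorem Finset.SupIndep.finrank_sup {V ι : Type*} [AddCommGroup V] [Module K V]
    {p : ι → Submodule K V} (hfd : ∀ i, FiniteDimensional K (p i)) {s : Finset ι}
    (hp : s.SupIndep p) : Module.finrank K ↥(s.sup p) = ∑ i ∈ s, Module.finrank K (p i) := by
  induction s using Finset.induction_on with
  | empty => simp
  | insert a s ha ih =>
    have hdisj : Disjoint (p a) (s.sup p) :=
      hp (Finset.subset_insert a s) (Finset.mem_insert_self a s) ha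
    have := Submodule.finrank_sup_add_finrank_inf_eq (p a) (s.sup p)
    rw [hdisj.eq_bot, finrank_bot, add_zero] at this
    rw [Finset.sup_insert, Finset.sum_insert ha, this, ih (hp.subset (Finset.subset_insert a s))]

section Chains

omit [Fintype P] [DecidableEq P]

theorem chainSupp_iff_isChain {u : Phat P →₀ ℕ} :
    ChainSupp u ↔ IsChain (· ≤ ·) (u.support : Set (Phat P)) :=
  ⟨fun h _ hσ _ hτ _ => h _ hσ _ hτ, fun h _ hσ _ hτ => h.total hσ hτ⟩

theorem ChainSupp.of_le {u u' : Phat P →₀ ℕ} (h : ChainSupp u') (hle : u ≤ u') : ChainSupp u :=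
  fun σ hσ τ hτ => h σ (Finsupp.support_mono hle hσ) τ (Finsupp.support_mono hle hτ)

theorem ChainSupp.exists_max {u : Phat P →₀ ℕ} (hc : ChainSupp u) (hne : u.support.Nonempty) :
    ∃ ρ ∈ u.support, ∀ σ ∈ u.support, (σ : P) ≤ ρ := by
  obtain ⟨ρ, hρ⟩ := Finset.exists_maximal hne
  exact ⟨ρ, hρ.1, fun σ hσ => (hc σ hσ ρ hρ.1).elim id (hρ.2 hσ)⟩

end Chains

section SquarefreeModule

variable {M : Type} [AddCommGroup M] [Module (MvPolynomial (Phat P) K) M] [Module K M]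
  [IsScalarTower K (MvPolynomial (Phat P) K) M] {π : (Phat P →₀ ℕ) → Submodule K M}

omit [Fintype P]

theorem IsSquarefreePMod.finrank_add_single (hM : IsSquarefreePMod M π) {u : Phat P →₀ ℕ}
    {τ : Phat P} (hc : ChainSupp (u + Finsupp.single τ 1)) (hτ : LeMaxSupp u τ) :
    Module.finrank K (π (u + Finsupp.single τ 1)) = Module.finrank K (π u) := by
  obtain ⟨-, -, -, hmul, -, hbij⟩ := hM
  let f : π u →ₗ[K] π (u + Finsupp.single τ 1) :=
    { toFun := fun x => ⟨(MvPolynomial.X τ : MvPolynomial (Phat P) K) • (x : M), hmul u τ x x.2⟩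
      map_add' := fun x y => Subtype.ext (smul_add _ _ _)
      map_smul' := fun c x => Subtype.ext (smul_comm _ c (x : M)) }
  exact (LinearEquiv.ofBijective f ((hbij u τ hc hτ).equiv _).bijective).finrank_eq.symm

theorem IsSquarefreePMod.finrank_add_eq (hM : IsSquarefreePMod M π) {u w : Phat P →₀ ℕ}
    {ρ : Phat P} (hρ : ρ ∈ u.support) (hc : ChainSupp (u + w))
    (hmax : ∀ σ ∈ (u + w).support, (σ : P) ≤ ρ) :
    Module.finrank K (π (u + w)) = Module.finrank K (π u) := by
  obtain ⟨s, rfl⟩ := Multiset.toFinsupp.surjective w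
  induction s using Multiset.induction_on with
  | empty => rw [map_zero, add_zero]
  | cons a s ih =>
    set w := Multiset.toFinsupp s
    have hw : u + Multiset.toFinsupp (a ::ₘ s) = u + w + Finsupp.single a 1 := by
      rw [← Multiset.singleton_add, map_add, Multiset.toFinsupp_singleton, add_comm _ w,
        add_assoc]
    rw [hw] at hc hmax ⊢
    have hsupp := Finsupp.support_mono (le_self_add : u + w ≤ u + w + Finsupp.single a 1)
    have ha : a ∈ (u + w + Finsupp.single a 1).support := by simp
    rw [hM.finrank_add_single hc ⟨ρ, Finsupp.support_mono le_self_add hρ, hmax a ha,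
        fun σ hσ => hmax σ (hsupp hσ)⟩,
      ih (hc.of_le le_self_add) fun σ hσ => hmax σ (hsupp hσ)]

theorem IsSquarefreePMod.finrank_eq_finrank_single_of_max (hM : IsSquarefreePMod M π)
    {u : Phat P →₀ ℕ} {ρ : Phat P} (hc : ChainSupp u) (hρ : ρ ∈ u.support)
    (hmax : ∀ σ ∈ u.support, (σ : P) ≤ ρ) :
    Module.finrank K (π u) = Module.finrank K (π (Finsupp.single ρ 1)) := by
  obtain ⟨w, rfl⟩ := exists_add_of_le
    (Finsupp.single_le_iff.2 (Nat.one_le_iff_ne_zero.2 (Finsupp.mem_support_iff.1 hρ)))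
  exact hM.finrank_add_eq (by simp) hc hmax

theorem IsSquarefreePMod.finrank_eq_finrank_eSet_support (hM : IsSquarefreePMod M π)
    {u : Phat P →₀ ℕ} (hc : ChainSupp u) :
    Module.finrank K (π u) = Module.finrank K (π (eSet u.support)) := by
  rcases u.support.eq_empty_or_nonempty with h | h
  · rw [h, Finsupp.support_eq_empty.1 h, eSet_empty]
  obtain ⟨ρ, hρ, hmax⟩ := hc.exists_max h
  obtain ⟨w, hw⟩ := exists_add_of_le (eSet_le_iff.2 subset_rfl : eSet u.support ≤ u)
  have := hM.finrank_add_eq (w := w) (by rwa [support_eSet]) (by rwa [← hw]) (by rwa [← hw])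
  rwa [← hw] at this

theorem IsSquarefreePMod.finrank_eSet_eq_zero (hM : IsSquarefreePMod M π) {rk : P → ℕ}
    (hrk : StrictMono rk) {d : ℕ} (hd : ∀ σ : Phat P, d < rk σ.1 → π (Finsupp.single σ 1) = ⊥)
    {C : Finset (Phat P)} (hchain : IsChain (· ≤ ·) (C : Set (Phat P))) {σ : Phat P}
    (hσ : σ ∈ C) (hσd : d < rk σ) : Module.finrank K (π (eSet C)) = 0 := by
  have hc : ChainSupp (eSet C) := chainSupp_iff_isChain.2 (by rwa [support_eSet])
  obtain ⟨ρ, hρ, hmax⟩ := hc.exists_max (by rw [support_eSet]; exact ⟨σ, hσ⟩)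
  rw [support_eSet] at hρ hmax
  rw [hM.finrank_eq_finrank_single_of_max hc (by rwa [support_eSet]) (by rwa [support_eSet]),
    hd ρ (hσd.trans_le (hrk.monotone (hmax σ hσ))), finrank_bot]

end SquarefreeModule

section RankGrading

omit [Fintype P] [DecidableEq P]

variable {rk : P → ℕ}

theorem rkDeg_apply (u : Phat P →₀ ℕ) (i : ℕ) :
    rkDeg rk u i = ∑ σ ∈ u.support, if rk σ = i then u σ else 0 := by
  simp [rkDeg, Finsupp.sum, Finsupp.finsetSum_apply, Finsupp.single_apply]

theorem support_rkDeg (u : Phat P →₀ ℕ) :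
    (rkDeg rk u).support = u.support.image (fun σ : Phat P => rk σ) := by
  ext i
  simp only [Finsupp.mem_support_iff, rkDeg_apply, ne_eq, Finset.sum_eq_zero_iff, not_forall,
    Finset.mem_image, exists_prop]
  refine exists_congr fun σ => and_congr_right fun hσ => ?_
  split_ifs with h <;> simp [h, hσ]

theorem ChainSupp.rkDeg_apply_rk (hrk : StrictMono rk) {u : Phat P →₀ ℕ} (hc : ChainSupp u)
    {σ : Phat P} (hσ : σ ∈ u.support) : rkDeg rk u (rk σ) = u σ := by
  rw [rkDeg_apply, Finset.sum_eq_single_of_mem σ hσ, if_pos rfl]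
  refine fun τ hτ hne => if_neg fun heq => hne ?_
  rcases hc τ hτ σ hσ with h | h
  · exact Subtype.ext (h.eq_of_not_lt fun hlt => (hrk hlt).ne heq)
  · exact Subtype.ext (h.eq_of_not_lt fun hlt => (hrk hlt).ne' heq).symm

noncomputable def chainLift (rk : P → ℕ) (v : ℕ →₀ ℕ) (C : Finset (Phat P)) : Phat P →₀ ℕ :=
  Finsupp.indicator C fun σ _ => v (rk σ)

theorem chainLift_apply_of_mem (v : ℕ →₀ ℕ) {C : Finset (Phat P)} {σ : Phat P} (hσ : σ ∈ C) :
    chainLift rk v C σ = v (rk σ) :=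
  Finsupp.indicator_of_mem hσ _

theorem chainLift_apply_of_notMem (v : ℕ →₀ ℕ) {C : Finset (Phat P)} {σ : Phat P}
    (hσ : σ ∉ C) : chainLift rk v C σ = 0 :=
  Finsupp.indicator_of_notMem hσ _

theorem support_chainLift {v : ℕ →₀ ℕ} {C : Finset (Phat P)}
    (hC : C.image (fun σ : Phat P => rk σ) = v.support) : (chainLift rk v C).support = C := by
  ext σ
  rw [Finsupp.mem_support_iff]
  by_cases hσ : σ ∈ C
  · rw [chainLift_apply_of_mem v hσ, ← Finsupp.mem_support_iff, ← hC]
    exact iff_of_true (Finset.mem_image_of_mem _ hσ) hσ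
  · rw [chainLift_apply_of_notMem v hσ]
    exact iff_of_false (not_not.2 rfl) hσ

theorem rkDeg_chainLift (hrk : StrictMono rk) {v : ℕ →₀ ℕ} {C : Finset (Phat P)}
    (hchain : IsChain (· ≤ ·) (C : Set (Phat P)))
    (hC : C.image (fun σ : Phat P => rk σ) = v.support) : rkDeg rk (chainLift rk v C) = v := by
  have hsupp := support_chainLift hC
  have hc : ChainSupp (chainLift rk v C) := chainSupp_iff_isChain.2 (by rwa [hsupp])
  ext i
  by_cases hi : i ∈ v.support
  · obtain ⟨σ, hσ, rfl⟩ := Finset.mem_image.1 (hC ▸ hi)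
    rw [hc.rkDeg_apply_rk hrk (by rwa [hsupp]), chainLift_apply_of_mem v hσ]
  · rw [Finsupp.notMem_support_iff.1 hi, ← Finsupp.notMem_support_iff, support_rkDeg, hsupp, hC]
    exact hi

theorem ChainSupp.chainLift_rkDeg (hrk : StrictMono rk) {u : Phat P →₀ ℕ} (hc : ChainSupp u) :
    chainLift rk (rkDeg rk u) u.support = u := by
  ext σ
  by_cases hσ : σ ∈ u.support
  · rw [chainLift_apply_of_mem _ hσ, hc.rkDeg_apply_rk hrk hσ]
  · rw [chainLift_apply_of_notMem _ hσ, Finsupp.notMem_support_iff.1 hσ]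

end RankGrading

section ChainDecomposition

variable {rk : P → ℕ}

noncomputable def chainsWithRanks (rk : P → ℕ) (S : Finset ℕ) : Finset (Finset (Phat P)) :=
  {C | IsChain (· ≤ ·) (C : Set (Phat P)) ∧ C.image (fun σ : Phat P => rk σ) = S}

theorem mem_chainsWithRanks {S : Finset ℕ} {C : Finset (Phat P)} :
    C ∈ chainsWithRanks rk S ↔
      IsChain (· ≤ ·) (C : Set (Phat P)) ∧ C.image (fun σ : Phat P => rk σ) = S := by
  simp [chainsWithRanks]

variable {M : Type} [AddCommGroup M] [Module (MvPolynomial (Phat P) K) M] [Module K M]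
  [IsScalarTower K (MvPolynomial (Phat P) K) M] {π : (Phat P →₀ ℕ) → Submodule K M}

/-- Only chain-supported multidegrees contribute, and those of degree `v` are lifts of chains. -/
theorem IsSquarefreePMod.iSup_rkDeg_eq (hM : IsSquarefreePMod M π) (hrk : StrictMono rk)
    (v : ℕ →₀ ℕ) :
    ⨆ u : {u : Phat P →₀ ℕ // rkDeg rk u = v}, π u.1 =
      ((chainsWithRanks rk v.support).image (chainLift rk v)).sup π := by
  refine le_antisymm (iSup_le fun ⟨u, hu⟩ => ?_) (Finset.sup_le fun u hu => ?_)
  · by_cases hc : ChainSupp u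
    · refine Finset.le_sup (Finset.mem_image.2 ⟨u.support, ?_, ?_⟩)
      · rw [mem_chainsWithRanks, ← chainSupp_iff_isChain, ← hu, support_rkDeg]
        exact ⟨hc, rfl⟩
      · subst hu
        exact hc.chainLift_rkDeg hrk
    · rw [hM.2.2.2.2.1 u hc]
      exact bot_le
  · obtain ⟨C, hC, rfl⟩ := Finset.mem_image.1 hu
    obtain ⟨hchain, himg⟩ := mem_chainsWithRanks.1 hC
    exact le_iSup (fun u : {u : Phat P →₀ ℕ // rkDeg rk u = v} => π u.1)
      ⟨_, rkDeg_chainLift hrk hchain himg⟩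

theorem IsSquarefreePMod.finrank_iSup_rkDeg_eq_sum (hM : IsSquarefreePMod M π)
    (hrk : StrictMono rk) (v : ℕ →₀ ℕ) :
    Module.finrank K ↥(⨆ u : {u : Phat P →₀ ℕ // rkDeg rk u = v}, π u.1) =
      ∑ C ∈ chainsWithRanks rk v.support, Module.finrank K (π (eSet C)) := by
  rw [hM.iSup_rkDeg_eq hrk, Finset.SupIndep.finrank_sup hM.2.2.1
    (hM.1.submodule_iSupIndep.supIndep' _), Finset.sum_image]
  · refine Finset.sum_congr rfl fun C hC => ?_
    obtain ⟨hchain, himg⟩ := mem_chainsWithRanks.1 hC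
    have hc : ChainSupp (chainLift rk v C) := by
      rwa [chainSupp_iff_isChain, support_chainLift himg]
    rw [hM.finrank_eq_finrank_eSet_support hc, support_chainLift himg]
  · intro C hC C' hC' h
    rw [← support_chainLift (mem_chainsWithRanks.1 hC).2, h,
      support_chainLift (mem_chainsWithRanks.1 hC').2]

end ChainDecomposition

/-- Lemma 2.5.  Let `M` be a squarefree `P`-module of
dimension `d`, with the `ℕ^d`-grading induced by `deg x_σ = e_{rk σ}`; its
`v`-th graded piece is `M_v = ⊕_{rkDeg u = v} M_u`.  Then the `ℕ^d`-graded
Hilbert series of `M` equals `(∑_{S ⊆ [d]} h_S(M) t^S) / ∏_{i=1}^d (1 - t_i)`,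
where `h_S(M) = ∑_{T ⊆ S} (-1)^{|S|-|T|} dim_K M_{e_T}`. -/
theorem squarefree_hilbert_series
    (rk : P → ℕ)
    (hrank0 : ∀ x : P, rk x = 0 ↔ x = ⊥)
    (hcov : ∀ x y : P, x ⋖ y → rk y = rk x + 1)
    (M : Type) [AddCommGroup M]
    [Module (MvPolynomial (Phat P) K) M] [Module K M]
    [IsScalarTower K (MvPolynomial (Phat P) K) M]
    (π : (Phat P →₀ ℕ) → Submodule K M)
    (hM : IsSquarefreePMod (K := K) M π)
    (d : ℕ)
    -- `M` has dimension (at most) `d`: components of rank `> d` vanish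
    (hd : ∀ σ : Phat P, d < rk σ.1 → π (Finsupp.single σ 1) = ⊥)
    -- the `ℕ^d`-graded pieces of `M`
    (Mv : (ℕ →₀ ℕ) → Submodule K M)
    (hMv : ∀ v, Mv v = ⨆ u : {u : Phat P →₀ ℕ // rkDeg rk u = v}, π u.1)
    -- the `ℕ^d`-graded Hilbert series of `M`
    (H : MvPowerSeries ℕ ℤ)
    (hH : ∀ v : ℕ →₀ ℕ, MvPowerSeries.coeff v H = (Module.finrank K (Mv v) : ℤ))
    -- the flag `f`- and `h`-vectors of `M`
    (f h : Finset ℕ → ℤ)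
    (hf : ∀ S : Finset ℕ, f S =
      (Module.finrank K (Mv (∑ i ∈ S, Finsupp.single i 1)) : ℤ))
    (hh : ∀ S : Finset ℕ, h S =
      ∑ T ∈ S.powerset, (-1 : ℤ) ^ (S.card - T.card) * f T) :
    (∏ i ∈ Finset.Icc 1 d, (1 - MvPowerSeries.X i)) * H =
      ∑ S ∈ (Finset.Icc 1 d).powerset,
        MvPowerSeries.monomial (∑ i ∈ S, Finsupp.single i 1) (h S) := by
  have : LocallyFiniteOrder P := Fintype.toLocallyFiniteOrder
  have hrk : StrictMono rk := (strictMono_iff_forall_covBy rk).2 fun x y hxy => by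
    rw [hcov x y hxy]
    exact Nat.lt_succ_self _
  have hdim : ∀ v, (Module.finrank K (Mv v) : ℤ) =
      ∑ C ∈ chainsWithRanks rk v.support, (Module.finrank K (π (eSet C)) : ℤ) := fun v => by
    rw [hMv, hM.finrank_iSup_rkDeg_eq_sum hrk, Nat.cast_sum]
  refine prod_one_sub_X_mul_eq_sum_monomial
    (F := fun S => ∑ C ∈ chainsWithRanks rk S, (Module.finrank K (π (eSet C)) : ℤ))
    (fun v => by rw [hH, hdim]) ?_ fun S => ?_
  · intro S hS
    obtain ⟨i, hiS, hid⟩ := Finset.not_subset.1 hS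
    refine Finset.sum_eq_zero fun C hC => ?_
    obtain ⟨hchain, himg⟩ := mem_chainsWithRanks.1 hC
    obtain ⟨σ, hσ, rfl⟩ := Finset.mem_image.1 (himg ▸ hiS)
    have hσ0 : rk σ ≠ 0 := fun h => σ.2 ((hrank0 σ).1 h)
    have hσd : d < rk σ := by
      simp only [Finset.mem_Icc, not_and_or, not_le] at hid
      omega
    rw [hM.finrank_eSet_eq_zero hrk hd hchain hσ hσd, Nat.cast_zero]
  · rw [hh]
    refine Finset.sum_congr rfl fun T _ => ?_
    rw [hf, ← eSet, hdim, support_eSet]
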